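/- arXiv:2502.01156 — 2 statements merged into one kernel-verified Lean document; each statement's English description precedes it below -/
import Mathlib

section
/- Let σ : ℝ → ℝ be 1-Lipschitz and let L ≥ 1. Let θ = (W̃_1,…,W̃_L) and θ' = (W̃'_1,…,W̃'_L) be parameters of two networks with the same architecture (L, (N_0,…,N_L)) and identical biases (the last columns of W̃_ℓ and W̃'_ℓ coincide for every ℓ), and let W_ℓ, W'_ℓ denote the matrices obtained by removing the last column. For ℓ = 1,…,L−1 let θ'_ℓ = (W̃'_1,…,W̃'_ℓ) be the truncated network of depth ℓ. Then for every x ∈ ℝ^{N_0}: ‖R_θ(x̃) − R_{θ'}(x̃)‖_∞ ≤ Σ_{ℓ=1}^{L} (∏_{k=ℓ+1}^{L} ‖W_k‖_{op,∞}) · ‖W_ℓ − W'_ℓ‖_{op,∞} · ‖R_{θ'_{ℓ−1}}(x̃)‖_∞, with the conventions R_{θ'_0}(x̃) = x and ∏_{k=L+1}^{L} ‖W_k‖_{op,∞} = 1. -/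
/-- The ℓ∞ operator norm of a real matrix: `sup_{‖x‖∞ = 1} ‖Ax‖∞`
(the norm on `n → ℝ` is the sup norm). -/
noncomputable def opNormInf {m n : Type*} [Fintype m] [Fintype n] (A : Matrix m n ℝ) : ℝ :=
  sSup ((fun x : n → ℝ => ‖A.mulVec x‖) '' {x | ‖x‖ = 1})

/-- Realization of a network with biases: layer `ℓ` (0-indexed) has augmented weight matrix
`W ℓ ∈ ℝ^{N (ℓ+1) × (N ℓ + 1)}` whose last column is the bias; the input of each layer is
augmented with a final coordinate equal to `1`, and the activation `σ` is applied
componentwise. `realizeAug σ N W ℓ x` is the realization of the depth-`ℓ` truncated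
network `θ_ℓ = (W̃_1, …, W̃_ℓ)` at `x̃`; for `ℓ = 0` it equals `x`. -/
noncomputable def realizeAug (σ : ℝ → ℝ) (N : ℕ → ℕ)
    (W : ∀ ℓ : ℕ, Matrix (Fin (N (ℓ + 1))) (Fin (N ℓ + 1)) ℝ) :
    (L : ℕ) → (Fin (N 0) → ℝ) → Fin (N L) → ℝ
  | 0, x => x
  | L + 1, x => fun i => σ ((W L).mulVec (Fin.snoc (realizeAug σ N W L x) 1) i)

/-- The weight matrix `W_ℓ`: the augmented matrix `W̃_ℓ` with its last (bias) column removed. -/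
def stripBias {m n : ℕ} (A : Matrix (Fin m) (Fin (n + 1)) ℝ) : Matrix (Fin m) (Fin n) ℝ :=
  A.submatrix id Fin.castSucc

section OpNormInf

attribute [local instance] Matrix.linftyOpNormedAddCommGroup

variable {m n : Type*} [Fintype m] [Fintype n]

lemma opNormInf_bddAbove (A : Matrix m n ℝ) :
    BddAbove ((fun x : n → ℝ => ‖A.mulVec x‖) '' {x | ‖x‖ = 1}) := by
  refine ⟨‖A‖, ?_⟩
  rintro _ ⟨x, hx, rfl⟩
  calc ‖A.mulVec x‖ ≤ ‖A‖ * ‖x‖ := Matrix.linfty_opNorm_mulVec A x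
  _ = ‖A‖ := by rw [hx, mul_one]

lemma opNormInf_nonneg (A : Matrix m n ℝ) : 0 ≤ opNormInf A := by
  rcases Set.eq_empty_or_nonempty ((fun x : n → ℝ => ‖A.mulVec x‖) '' {x | ‖x‖ = 1}) with h | h
  · simp [opNormInf, h]
  · obtain ⟨y, ⟨x, hx, rfl⟩⟩ := h
    exact le_trans (norm_nonneg _) (le_csSup (opNormInf_bddAbove A) ⟨x, hx, rfl⟩)

lemma norm_mulVec_le (A : Matrix m n ℝ) (v : n → ℝ) :
    ‖A.mulVec v‖ ≤ opNormInf A * ‖v‖ := by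
  rcases eq_or_ne v 0 with rfl | hv
  · simp [Matrix.mulVec_zero]
  · have hnv : ‖v‖ ≠ 0 := norm_ne_zero_iff.mpr hv
    set u : n → ℝ := ‖v‖⁻¹ • v with hu
    have hu1 : ‖u‖ = 1 := by
      rw [hu, norm_smul, norm_inv, norm_norm, inv_mul_cancel₀ hnv]
    have key : ‖A.mulVec u‖ ≤ opNormInf A :=
      le_csSup (opNormInf_bddAbove A) ⟨u, hu1, rfl⟩
    have : ‖A.mulVec u‖ = ‖v‖⁻¹ * ‖A.mulVec v‖ := by
      rw [hu, Matrix.mulVec_smul, norm_smul, norm_inv, norm_norm]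
    rw [this] at key
    have hpos : (0:ℝ) < ‖v‖ := lt_of_le_of_ne (norm_nonneg v) (Ne.symm hnv)
    calc ‖A.mulVec v‖ = ‖v‖⁻¹ * ‖A.mulVec v‖ * ‖v‖ := by field_simp
    _ ≤ opNormInf A * ‖v‖ := by
        exact mul_le_mul_of_nonneg_right key (norm_nonneg v)

end OpNormInf

lemma mulVec_snoc {m n : ℕ} (A : Matrix (Fin m) (Fin (n + 1)) ℝ) (v : Fin n → ℝ) (c : ℝ) :
    A.mulVec (Fin.snoc v c) =
      (stripBias A).mulVec v + c • (fun i => A i (Fin.last n)) := by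
  funext i
  simp [Matrix.mulVec, dotProduct, Fin.sum_univ_castSucc, stripBias, mul_comm]

lemma norm_sigma_sub {k : ℕ} (σ : ℝ → ℝ) (hσ : LipschitzWith 1 σ) (a b : Fin k → ℝ) :
    ‖(fun i => σ (a i)) - (fun i => σ (b i))‖ ≤ ‖a - b‖ := by
  rw [show ((fun i => σ (a i)) - fun i => σ (b i)) = fun i => σ (a i) - σ (b i) from rfl]
  apply pi_norm_le_iff_of_nonneg (norm_nonneg (a - b)) |>.mpr
  intro i
  calc ‖σ (a i) - σ (b i)‖ = dist (σ (a i)) (σ (b i)) := (dist_eq_norm _ _).symm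
  _ ≤ 1 * dist (a i) (b i) := hσ.dist_le_mul _ _
  _ = ‖a i - b i‖ := by rw [one_mul, dist_eq_norm]
  _ = ‖(a - b) i‖ := rfl
  _ ≤ ‖a - b‖ := norm_le_pi_norm _ i

/-- for a 1-Lipschitz activation `σ` and two networks with the same architecture
and identical biases (layers indexed `0,…,L-1`; paper layer `ℓ` is index `ℓ-1`),
`‖R_θ(x̃) - R_{θ'}(x̃)‖∞ ≤ Σ_{ℓ=1}^L (∏_{k=ℓ+1}^L ‖W_k‖_{op,∞}) ‖W_ℓ - W'_ℓ‖_{op,∞}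
‖R_{θ'_{ℓ-1}}(x̃)‖∞`, with `R_{θ'_0}(x̃) = x` and empty products equal to `1`. -/
theorem statement3 (σ : ℝ → ℝ) (hσ : LipschitzWith 1 σ) (L : ℕ) (hL : 1 ≤ L) (N : ℕ → ℕ)
    (W W' : ∀ ℓ : ℕ, Matrix (Fin (N (ℓ + 1))) (Fin (N ℓ + 1)) ℝ)
    (hbias : ∀ ℓ < L, ∀ i, W ℓ i (Fin.last (N ℓ)) = W' ℓ i (Fin.last (N ℓ)))
    (x : Fin (N 0) → ℝ) :
    ‖realizeAug σ N W L x - realizeAug σ N W' L x‖ ≤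
      ∑ ℓ ∈ Finset.range L,
        (∏ k ∈ Finset.Ico (ℓ + 1) L, opNormInf (stripBias (W k))) *
          opNormInf (stripBias (W ℓ) - stripBias (W' ℓ)) *
          ‖realizeAug σ N W' ℓ x‖ := by
  clear hL
  induction L with
  | zero => simp [realizeAug]
  | succ L ih =>
    have hbias' : ∀ ℓ < L, ∀ i, W ℓ i (Fin.last (N ℓ)) = W' ℓ i (Fin.last (N ℓ)) :=
      fun ℓ hℓ => hbias ℓ (Nat.lt_succ_of_lt hℓ)
    set f := realizeAug σ N W L x
    set g := realizeAug σ N W' L x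
    have key : (W L).mulVec (Fin.snoc f 1) - (W' L).mulVec (Fin.snoc g 1) =
        (stripBias (W L)).mulVec (f - g) +
          (stripBias (W L) - stripBias (W' L)).mulVec g := by
      rw [mulVec_snoc, mulVec_snoc]
      have hcol : (fun i => (W L) i (Fin.last (N L))) =
          (fun i => (W' L) i (Fin.last (N L))) := by
        funext i; exact hbias L (Nat.lt_succ_self L) i
      rw [hcol, Matrix.mulVec_sub, Matrix.sub_mulVec]
      abel
    have step : ‖realizeAug σ N W (L+1) x - realizeAug σ N W' (L+1) x‖ ≤
        opNormInf (stripBias (W L)) * ‖f - g‖ +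
          opNormInf (stripBias (W L) - stripBias (W' L)) * ‖g‖ := by
      calc ‖realizeAug σ N W (L+1) x - realizeAug σ N W' (L+1) x‖
          ≤ ‖(W L).mulVec (Fin.snoc f 1) - (W' L).mulVec (Fin.snoc g 1)‖ := by
            exact norm_sigma_sub σ hσ _ _
      _ = ‖(stripBias (W L)).mulVec (f - g) +
            (stripBias (W L) - stripBias (W' L)).mulVec g‖ := by rw [key]
      _ ≤ ‖(stripBias (W L)).mulVec (f - g)‖ +
            ‖(stripBias (W L) - stripBias (W' L)).mulVec g‖ := norm_add_le _ _
      _ ≤ opNormInf (stripBias (W L)) * ‖f - g‖ +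
            opNormInf (stripBias (W L) - stripBias (W' L)) * ‖g‖ :=
          add_le_add (norm_mulVec_le _ _) (norm_mulVec_le _ _)
    refine step.trans ?_
    rw [Finset.sum_range_succ]
    have hsum : ∀ ℓ ∈ Finset.range L,
        (∏ k ∈ Finset.Ico (ℓ + 1) (L + 1), opNormInf (stripBias (W k))) *
            opNormInf (stripBias (W ℓ) - stripBias (W' ℓ)) * ‖realizeAug σ N W' ℓ x‖ =
          opNormInf (stripBias (W L)) *
            ((∏ k ∈ Finset.Ico (ℓ + 1) L, opNormInf (stripBias (W k))) *
              opNormInf (stripBias (W ℓ) - stripBias (W' ℓ)) * ‖realizeAug σ N W' ℓ x‖) := by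
      intro ℓ hℓ
      rw [Finset.prod_Ico_succ_top (Nat.succ_le_of_lt (Finset.mem_range.mp hℓ))]
      ring
    rw [Finset.sum_congr rfl hsum, ← Finset.mul_sum]
    simp only [Finset.Ico_self, Finset.prod_empty, one_mul]
    exact add_le_add (mul_le_mul_of_nonneg_left (ih hbias') (opNormInf_nonneg _)) le_rfl
end

section
/- Let L ≥ 1 and let θ = (W̃_1,…,W̃_L) and θ' = (W̃'_1,…,W̃'_L) be parameters of two ReLU networks with the same architecture (L, (N_0,…,N_L)) and identical biases. Assume ‖W̃_ℓ‖_{op,∞} ≤ r_ℓ and ‖W̃'_ℓ‖_{op,∞} ≤ r_ℓ for every ℓ, with r_ℓ > 0. Then for every D > 0 and every x ∈ [−D,D]^{N_0}: ‖R_θ(x̃) − R_{θ'}(x̃)‖_∞ ≤ max(D,1) · Σ_{ℓ=1}^{L} N_{ℓ−1} · (∏_{k=ℓ+1}^{L} r_k) · (max_{i=1,…,ℓ−1} ∏_{s=i}^{ℓ−1} r_s) · ‖θ − θ'‖_∞, where for ℓ = 1 the factor max_{i=1,…,ℓ−1} ∏_{s=i}^{ℓ−1} r_s is taken to be 1, and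 empty products equal 1. -/
/-- `‖θ - θ'‖∞`: the maximum over the first `L` layers and all entries of the absolute
entrywise difference of the parameters. -/
noncomputable def paramDistAug (N : ℕ → ℕ) (L : ℕ)
    (W W' : ∀ ℓ : ℕ, Matrix (Fin (N (ℓ + 1))) (Fin (N ℓ + 1)) ℝ) : ℝ :=
  sSup {c : ℝ | ∃ ℓ < L, ∃ i j, c = |W ℓ i j - W' ℓ i j|}

lemma opNormInf_mulVec_le {m n : Type*} [Fintype m] [Fintype n] (A : Matrix m n ℝ) (v : n → ℝ) :
    ‖A.mulVec v‖ ≤ opNormInf A * ‖v‖ := by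
  have hbdd : BddAbove ((fun x : n → ℝ => ‖A.mulVec x‖) '' {x | ‖x‖ = 1}) := by
    refine ⟨∑ i, ∑ j, |A i j|, ?_⟩
    rintro c ⟨u, hu, rfl⟩
    rw [pi_norm_le_iff_of_nonneg (by positivity)]
    intro i
    calc ‖A.mulVec u i‖ = |∑ j, A i j * u j| := rfl
      _ ≤ ∑ j, |A i j * u j| := Finset.abs_sum_le_sum_abs _ _
      _ ≤ ∑ j, |A i j| := by
          refine Finset.sum_le_sum fun j _ => ?_
          rw [abs_mul]
          have h1 : |u j| ≤ 1 := by
            have := norm_le_pi_norm u j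
            rw [hu] at this; simpa using this
          nlinarith [abs_nonneg (A i j)]
      _ ≤ ∑ i', ∑ j, |A i' j| :=
          Finset.single_le_sum (f := fun i' => ∑ j, |A i' j|) (fun i' _ => by positivity)
            (Finset.mem_univ i)
  rcases eq_or_ne v 0 with rfl | hv
  · simp [Matrix.mulVec_zero]
  · have hnv : 0 < ‖v‖ := norm_pos_iff.mpr hv
    set u : n → ℝ := ‖v‖⁻¹ • v with hu
    have hun : ‖u‖ = 1 := by
      rw [hu, norm_smul, norm_inv, norm_norm, inv_mul_cancel₀ hnv.ne']
    have h1 : ‖A.mulVec u‖ ≤ opNormInf A := le_csSup hbdd ⟨u, hun, rfl⟩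
    have h2 : A.mulVec u = ‖v‖⁻¹ • A.mulVec v := by
      rw [hu, Matrix.mulVec_smul]
    rw [h2, norm_smul, norm_inv, norm_norm] at h1
    calc ‖A.mulVec v‖ = ‖v‖ * (‖v‖⁻¹ * ‖A.mulVec v‖) := by field_simp
      _ ≤ ‖v‖ * opNormInf A := by nlinarith
      _ = opNormInf A * ‖v‖ := mul_comm _ _

lemma paramDistAug_nonneg (N : ℕ → ℕ) (L : ℕ)
    (W W' : ∀ ℓ : ℕ, Matrix (Fin (N (ℓ + 1))) (Fin (N ℓ + 1)) ℝ) :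
    0 ≤ paramDistAug N L W W' :=
  Real.sSup_nonneg (by rintro c ⟨ℓ, _, i, j, rfl⟩; positivity)

lemma le_paramDistAug (N : ℕ → ℕ) (L : ℕ)
    (W W' : ∀ ℓ : ℕ, Matrix (Fin (N (ℓ + 1))) (Fin (N ℓ + 1)) ℝ)
    {ℓ : ℕ} (hℓ : ℓ < L) (i : Fin (N (ℓ + 1))) (j : Fin (N ℓ + 1)) :
    |W ℓ i j - W' ℓ i j| ≤ paramDistAug N L W W' := by
  apply le_csSup
  · apply Set.Finite.bddAbove
    apply Set.Finite.subset (Set.Finite.biUnion (Set.finite_Iio L)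
      (fun ℓ' _ => Set.finite_range
        (fun p : Fin (N (ℓ' + 1)) × Fin (N ℓ' + 1) => |W ℓ' p.1 p.2 - W' ℓ' p.1 p.2|)))
    rintro c ⟨ℓ', hℓ', i', j', rfl⟩
    exact Set.mem_biUnion hℓ' ⟨(i', j'), rfl⟩
  · exact ⟨ℓ, hℓ, i, j, rfl⟩

noncomputable def Gaux (r : ℕ → ℝ) (ℓ : ℕ) : ℝ :=
  if h : 0 < ℓ then
    (Finset.range ℓ).sup' (Finset.nonempty_range_iff.mpr h.ne')
      (fun i => ∏ s ∈ Finset.Ico i ℓ, r s)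
  else 1

lemma Gaux_pos {r : ℕ → ℝ} {ℓ : ℕ} (h : ∀ s < ℓ, 0 < r s) : 0 < Gaux r ℓ := by
  unfold Gaux
  split_ifs with h'
  · rw [Finset.lt_sup'_iff]
    exact ⟨0, Finset.mem_range.mpr h',
      Finset.prod_pos fun s hs => h s (Finset.mem_Ico.mp hs).2⟩
  · exact one_pos

lemma Gaux_step (r : ℕ → ℝ) (ℓ : ℕ) :
    r ℓ * max (Gaux r ℓ) 1 ≤ Gaux r (ℓ + 1) := by
  have hne : (Finset.range (ℓ + 1)).Nonempty :=
    Finset.nonempty_range_iff.mpr (Nat.succ_ne_zero ℓ)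
  have hG1 : Gaux r (ℓ + 1)
      = (Finset.range (ℓ + 1)).sup' hne (fun i => ∏ s ∈ Finset.Ico i (ℓ + 1), r s) := by
    rw [Gaux, dif_pos (Nat.succ_pos ℓ)]
  have hsingle : (∏ s ∈ Finset.Ico ℓ (ℓ + 1), r s) = r ℓ := by
    rw [Finset.prod_Ico_succ_top le_rfl, Finset.Ico_self, Finset.prod_empty, one_mul]
  have h1 : r ℓ ≤ Gaux r (ℓ + 1) := by
    rw [hG1]
    exact hsingle ▸ Finset.le_sup' (f := fun i => ∏ s ∈ Finset.Ico i (ℓ + 1), r s)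
      (Finset.mem_range.mpr (Nat.lt_succ_self ℓ))
  have h2 : r ℓ * Gaux r ℓ ≤ Gaux r (ℓ + 1) := by
    by_cases hℓ : 0 < ℓ
    · have hne' : (Finset.range ℓ).Nonempty := Finset.nonempty_range_iff.mpr hℓ.ne'
      obtain ⟨i0, hi0, hval⟩ :=
        Finset.exists_mem_eq_sup' hne' (fun i => ∏ s ∈ Finset.Ico i ℓ, r s)
      have hGl : Gaux r ℓ = ∏ s ∈ Finset.Ico i0 ℓ, r s := by
        rw [Gaux, dif_pos hℓ]; exact hval
      have hi0ℓ : i0 ≤ ℓ := le_of_lt (Finset.mem_range.mp hi0)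
      have hprod : r ℓ * ∏ s ∈ Finset.Ico i0 ℓ, r s = ∏ s ∈ Finset.Ico i0 (ℓ + 1), r s := by
        rw [Finset.prod_Ico_succ_top hi0ℓ, mul_comm]
      rw [hGl, hG1, hprod]
      exact Finset.le_sup' (f := fun i => ∏ s ∈ Finset.Ico i (ℓ + 1), r s)
        (Finset.mem_range.mpr (Nat.lt_succ_of_le hi0ℓ))
    · have : Gaux r ℓ = 1 := by rw [Gaux, dif_neg hℓ]
      rw [this, mul_one]; exact h1
  rcases max_choice (Gaux r ℓ) 1 with h | h <;> rw [h]
  · exact h2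
  · rw [mul_one]; exact h1

lemma relu_lip (a b : ℝ) : |max 0 a - max 0 b| ≤ |a - b| := by
  simpa [max_comm] using abs_max_sub_max_le_abs a b 0

lemma relu_abs_le (t : ℝ) : |max 0 t| ≤ |t| := by simpa using relu_lip t 0

lemma realizeAug_succ (σ : ℝ → ℝ) (N : ℕ → ℕ)
    (W : ∀ ℓ : ℕ, Matrix (Fin (N (ℓ + 1))) (Fin (N ℓ + 1)) ℝ) (L : ℕ) (x : Fin (N 0) → ℝ) :
    realizeAug σ N W (L + 1) x
      = fun i => σ ((W L).mulVec (Fin.snoc (realizeAug σ N W L x) 1) i) := rfl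

/-- for ReLU networks with identical biases and layerwise operator norm bounds
`r ℓ > 0` (layers 0-indexed: paper layer `ℓ` is index `ℓ-1`): for every `x ∈ [-D,D]^{N 0}`,
`‖R_θ(x̃) - R_{θ'}(x̃)‖∞ ≤ max(D,1) · Σ_{ℓ=1}^L N_{ℓ-1} (∏_{k=ℓ+1}^L r_k)
(max_{i=1,…,ℓ-1} ∏_{s=i}^{ℓ-1} r_s) · ‖θ - θ'‖∞`, where for `ℓ = 1` the inner maximum is
taken to be `1` and empty products equal `1`. -/
theorem statement10 (L : ℕ) (hL : 1 ≤ L) (N : ℕ → ℕ)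
    (W W' : ∀ ℓ : ℕ, Matrix (Fin (N (ℓ + 1))) (Fin (N ℓ + 1)) ℝ)
    (hbias : ∀ ℓ < L, ∀ i, W ℓ i (Fin.last (N ℓ)) = W' ℓ i (Fin.last (N ℓ)))
    (r : ℕ → ℝ) (hr : ∀ ℓ < L, 0 < r ℓ)
    (hW : ∀ ℓ < L, opNormInf (W ℓ) ≤ r ℓ)
    (hW' : ∀ ℓ < L, opNormInf (W' ℓ) ≤ r ℓ)
    (D : ℝ) (hD : 0 < D) (x : Fin (N 0) → ℝ) (hx : ∀ i, |x i| ≤ D) :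
    ‖realizeAug (fun t => max 0 t) N W L x - realizeAug (fun t => max 0 t) N W' L x‖ ≤
      max D 1 *
        (∑ ℓ ∈ Finset.range L, (N ℓ : ℝ) * (∏ k ∈ Finset.Ico (ℓ + 1) L, r k) *
          (if h : 0 < ℓ then
            (Finset.range ℓ).sup' (Finset.nonempty_range_iff.mpr h.ne')
              (fun i => ∏ s ∈ Finset.Ico i ℓ, r s)
          else 1)) *
        paramDistAug N L W W' := by
  set ε := paramDistAug N L W W' with hεdef
  have hε0 : 0 ≤ ε := paramDistAug_nonneg N L W W'
  set M := max D 1 with hMdef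
  have hM1 : (1 : ℝ) ≤ M := le_max_right D 1
  have hM0 : (0 : ℝ) ≤ M := zero_le_one.trans hM1
  -- forward bound for W'
  have hy' : ∀ ℓ, ℓ ≤ L → ‖realizeAug (fun t => max 0 t) N W' ℓ x‖ ≤ M * Gaux r ℓ := by
    intro ℓ
    induction ℓ with
    | zero =>
      intro _
      have hxD : ‖x‖ ≤ D := by
        rw [pi_norm_le_iff_of_nonneg hD.le]
        intro i; rw [Real.norm_eq_abs]; exact hx i
      have : Gaux r 0 = 1 := by rw [Gaux, dif_neg (lt_irrefl 0)]
      calc ‖realizeAug (fun t => max 0 t) N W' 0 x‖ = ‖x‖ := rfl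
        _ ≤ D := hxD
        _ ≤ M := le_max_left D 1
        _ = M * Gaux r 0 := by rw [this, mul_one]
    | succ ℓ ih =>
      intro hℓ1
      have hℓL : ℓ < L := hℓ1
      have hrℓ := hr ℓ hℓL
      have ihℓ := ih (le_of_lt hℓL)
      have hmax1 : (1 : ℝ) ≤ max (Gaux r ℓ) 1 := le_max_right _ _
      have hsnoc : ‖(Fin.snoc (realizeAug (fun t => max 0 t) N W' ℓ x) 1 : Fin (N ℓ + 1) → ℝ)‖
          ≤ M * max (Gaux r ℓ) 1 := by
        rw [pi_norm_le_iff_of_nonneg (by nlinarith)]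
        intro i
        refine Fin.lastCases ?_ (fun j => ?_) i
        · rw [Fin.snoc_last, norm_one]; nlinarith
        · rw [Fin.snoc_castSucc]
          calc ‖realizeAug (fun t => max 0 t) N W' ℓ x j‖
              ≤ ‖realizeAug (fun t => max 0 t) N W' ℓ x‖ := norm_le_pi_norm _ j
            _ ≤ M * Gaux r ℓ := ihℓ
            _ ≤ M * max (Gaux r ℓ) 1 := by nlinarith [le_max_left (Gaux r ℓ) 1]
      have h1 : ‖realizeAug (fun t => max 0 t) N W' (ℓ + 1) x‖
          ≤ ‖(W' ℓ).mulVec (Fin.snoc (realizeAug (fun t => max 0 t) N W' ℓ x) 1)‖ := by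
        rw [pi_norm_le_iff_of_nonneg (norm_nonneg _)]
        intro i
        rw [realizeAug_succ]
        calc ‖max 0 ((W' ℓ).mulVec (Fin.snoc (realizeAug (fun t => max 0 t) N W' ℓ x) 1) i)‖
            ≤ ‖(W' ℓ).mulVec (Fin.snoc (realizeAug (fun t => max 0 t) N W' ℓ x) 1) i‖ := by
              rw [Real.norm_eq_abs, Real.norm_eq_abs]; exact relu_abs_le _
          _ ≤ _ := norm_le_pi_norm _ i
      have h2 := opNormInf_mulVec_le (W' ℓ)
        (Fin.snoc (realizeAug (fun t => max 0 t) N W' ℓ x) 1)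
      have h3 : opNormInf (W' ℓ) * ‖(Fin.snoc (realizeAug (fun t => max 0 t) N W' ℓ x) 1 :
          Fin (N ℓ + 1) → ℝ)‖ ≤ r ℓ * (M * max (Gaux r ℓ) 1) := by
        apply mul_le_mul (hW' ℓ hℓL) hsnoc (norm_nonneg _) hrℓ.le
      calc ‖realizeAug (fun t => max 0 t) N W' (ℓ + 1) x‖
          ≤ r ℓ * (M * max (Gaux r ℓ) 1) := le_trans h1 (le_trans h2 h3)
        _ = M * (r ℓ * max (Gaux r ℓ) 1) := by ring
        _ ≤ M * Gaux r (ℓ + 1) := by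
            have := Gaux_step r ℓ
            nlinarith
  -- main error recursion
  have main : ∀ ℓ, ℓ ≤ L →
      ‖realizeAug (fun t => max 0 t) N W ℓ x - realizeAug (fun t => max 0 t) N W' ℓ x‖
        ≤ (∑ m ∈ Finset.range ℓ, (N m : ℝ) * (∏ k ∈ Finset.Ico (m + 1) ℓ, r k) * Gaux r m)
            * (M * ε) := by
    intro ℓ
    induction ℓ with
    | zero =>
      intro _
      simp [realizeAug]
    | succ ℓ ih =>
      intro hℓ1
      have hℓL : ℓ < L := hℓ1
      have hrℓ := hr ℓ hℓL
      have ihℓ := ih (le_of_lt hℓL)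
      set S : ℝ := ∑ m ∈ Finset.range ℓ, (N m : ℝ) * (∏ k ∈ Finset.Ico (m + 1) ℓ, r k) * Gaux r m
        with hSdef
      have hSnn : 0 ≤ S := by
        rw [hSdef]
        refine Finset.sum_nonneg fun m hm => ?_
        have hmℓ : m < ℓ := Finset.mem_range.mp hm
        refine mul_nonneg (mul_nonneg (Nat.cast_nonneg _) ?_) (Gaux_pos fun s hs =>
          hr s ((hs.trans hmℓ).trans hℓL)).le
        exact Finset.prod_pos (fun k hk => hr k ((Finset.mem_Ico.mp hk).2.trans hℓL)) |>.le
      have hGpos : 0 < Gaux r ℓ := Gaux_pos fun s hs => hr s (hs.trans hℓL)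
      set y := realizeAug (fun t => max 0 t) N W ℓ x with hydef
      set y' := realizeAug (fun t => max 0 t) N W' ℓ x with hy'def
      set v : Fin (N ℓ + 1) → ℝ := Fin.snoc y 1 with hvdef
      set v' : Fin (N ℓ + 1) → ℝ := Fin.snoc y' 1 with hv'def
      have hvv' : ‖v - v'‖ ≤ ‖y - y'‖ := by
        rw [pi_norm_le_iff_of_nonneg (norm_nonneg _)]
        intro i
        refine Fin.lastCases ?_ (fun j => ?_) i
        · rw [Pi.sub_apply, hvdef, hv'def]
          simp [Fin.snoc_last]
        · rw [Pi.sub_apply, hvdef, hv'def, Fin.snoc_castSucc, Fin.snoc_castSucc]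
          exact norm_le_pi_norm (y - y') j
      have hy'bound : ∀ j, |y' j| ≤ M * Gaux r ℓ := fun j => by
        calc |y' j| = ‖y' j‖ := (Real.norm_eq_abs _).symm
          _ ≤ ‖y'‖ := norm_le_pi_norm _ j
          _ ≤ M * Gaux r ℓ := hy' ℓ (le_of_lt hℓL)
      -- componentwise bound
      have hcomp : ∀ i, ‖(realizeAug (fun t => max 0 t) N W (ℓ + 1) x
            - realizeAug (fun t => max 0 t) N W' (ℓ + 1) x) i‖
          ≤ r ℓ * (S * (M * ε)) + (N ℓ : ℝ) * (ε * (M * Gaux r ℓ)) := by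
        intro i
        have heq : (realizeAug (fun t => max 0 t) N W (ℓ + 1) x
            - realizeAug (fun t => max 0 t) N W' (ℓ + 1) x) i
            = max 0 ((W ℓ).mulVec v i) - max 0 ((W' ℓ).mulVec v' i) := rfl
        rw [heq, Real.norm_eq_abs]
        have hlip := relu_lip ((W ℓ).mulVec v i) ((W' ℓ).mulVec v' i)
        have hdecomp : (W ℓ).mulVec v i - (W' ℓ).mulVec v' i
            = (W ℓ).mulVec (v - v') i + ((W ℓ) - (W' ℓ)).mulVec v' i := by
          rw [Matrix.mulVec_sub, Matrix.sub_mulVec]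
          simp [Pi.sub_apply]
        have habs : |(W ℓ).mulVec v i - (W' ℓ).mulVec v' i|
            ≤ |(W ℓ).mulVec (v - v') i| + |((W ℓ) - (W' ℓ)).mulVec v' i| := by
          rw [hdecomp]; exact abs_add_le _ _
        have hterm1 : |(W ℓ).mulVec (v - v') i| ≤ r ℓ * (S * (M * ε)) := by
          calc |(W ℓ).mulVec (v - v') i| = ‖(W ℓ).mulVec (v - v') i‖ :=
                (Real.norm_eq_abs _).symm
            _ ≤ ‖(W ℓ).mulVec (v - v')‖ := norm_le_pi_norm _ i
            _ ≤ opNormInf (W ℓ) * ‖v - v'‖ := opNormInf_mulVec_le _ _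
            _ ≤ r ℓ * ‖y - y'‖ :=
                mul_le_mul (hW ℓ hℓL) hvv' (norm_nonneg _) hrℓ.le
            _ ≤ r ℓ * (S * (M * ε)) := by
                have := ihℓ
                nlinarith
        have hterm2 : |((W ℓ) - (W' ℓ)).mulVec v' i| ≤ (N ℓ : ℝ) * (ε * (M * Gaux r ℓ)) := by
          have hsum : ((W ℓ) - (W' ℓ)).mulVec v' i
              = ∑ j, (W ℓ i j - W' ℓ i j) * v' j := by
            simp [Matrix.mulVec, dotProduct, Matrix.sub_apply]
          rw [hsum]
          calc |∑ j, (W ℓ i j - W' ℓ i j) * v' j|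
              ≤ ∑ j, |(W ℓ i j - W' ℓ i j) * v' j| := Finset.abs_sum_le_sum_abs _ _
            _ = (∑ j : Fin (N ℓ), |(W ℓ i j.castSucc - W' ℓ i j.castSucc) * v' j.castSucc|)
                + |(W ℓ i (Fin.last (N ℓ)) - W' ℓ i (Fin.last (N ℓ))) * v' (Fin.last (N ℓ))| :=
                Fin.sum_univ_castSucc _
            _ = ∑ j : Fin (N ℓ), |(W ℓ i j.castSucc - W' ℓ i j.castSucc) * v' j.castSucc| := by
                rw [hbias ℓ hℓL i]; simp
            _ ≤ ∑ _j : Fin (N ℓ), ε * (M * Gaux r ℓ) := by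
                refine Finset.sum_le_sum fun j _ => ?_
                rw [abs_mul]
                have hεj := le_paramDistAug N L W W' hℓL i j.castSucc
                have hvj : |v' j.castSucc| ≤ M * Gaux r ℓ := by
                  rw [hv'def, Fin.snoc_castSucc]; exact hy'bound j
                exact mul_le_mul hεj hvj (abs_nonneg _) hε0
            _ = (N ℓ : ℝ) * (ε * (M * Gaux r ℓ)) := by
                rw [Finset.sum_const, Finset.card_univ, Fintype.card_fin, nsmul_eq_mul]
        calc |max 0 ((W ℓ).mulVec v i) - max 0 ((W' ℓ).mulVec v' i)|
            ≤ |(W ℓ).mulVec v i - (W' ℓ).mulVec v' i| := hlip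
          _ ≤ |(W ℓ).mulVec (v - v') i| + |((W ℓ) - (W' ℓ)).mulVec v' i| := habs
          _ ≤ r ℓ * (S * (M * ε)) + (N ℓ : ℝ) * (ε * (M * Gaux r ℓ)) :=
              add_le_add hterm1 hterm2
      have hS1 : (∑ m ∈ Finset.range (ℓ + 1),
            (N m : ℝ) * (∏ k ∈ Finset.Ico (m + 1) (ℓ + 1), r k) * Gaux r m)
          = r ℓ * S + (N ℓ : ℝ) * Gaux r ℓ := by
        rw [hSdef, Finset.sum_range_succ, Finset.mul_sum]
        congr 1
        · refine Finset.sum_congr rfl fun m hm => ?_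
          rw [Finset.prod_Ico_succ_top (Nat.succ_le_of_lt (Finset.mem_range.mp hm))]
          ring
        · rw [Finset.Ico_self, Finset.prod_empty]; ring
      rw [hS1]
      rw [pi_norm_le_iff_of_nonneg (by positivity)]
      intro i
      calc ‖(realizeAug (fun t => max 0 t) N W (ℓ + 1) x
            - realizeAug (fun t => max 0 t) N W' (ℓ + 1) x) i‖
          ≤ r ℓ * (S * (M * ε)) + (N ℓ : ℝ) * (ε * (M * Gaux r ℓ)) := hcomp i
        _ = (r ℓ * S + (N ℓ : ℝ) * Gaux r ℓ) * (M * ε) := by ring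
  have hfin := main L le_rfl
  have hsum_eq : (∑ ℓ ∈ Finset.range L, (N ℓ : ℝ) * (∏ k ∈ Finset.Ico (ℓ + 1) L, r k) *
        (if h : 0 < ℓ then
          (Finset.range ℓ).sup' (Finset.nonempty_range_iff.mpr h.ne')
            (fun i => ∏ s ∈ Finset.Ico i ℓ, r s)
        else 1))
      = ∑ ℓ ∈ Finset.range L, (N ℓ : ℝ) * (∏ k ∈ Finset.Ico (ℓ + 1) L, r k) * Gaux r ℓ := rfl
  rw [hsum_eq]
  calc ‖realizeAug (fun t => max 0 t) N W L x - realizeAug (fun t => max 0 t) N W' L x‖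
      ≤ (∑ m ∈ Finset.range L, (N m : ℝ) * (∏ k ∈ Finset.Ico (m + 1) L, r k) * Gaux r m)
          * (M * ε) := hfin
    _ = M * (∑ ℓ ∈ Finset.range L, (N ℓ : ℝ) * (∏ k ∈ Finset.Ico (ℓ + 1) L, r k) * Gaux r ℓ)
          * ε := by ring
end
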